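/- If two intervals I, J ⊆ ℝ are δ-interleaved as interval modules and I is not 2δ-trivial, then J is nonempty; moreover for each x ∈ I with x + 2δ ∈ I, we have x + δ ∈ J. -/

import Mathlib

/-- A `P`-indexed persistence module over a field `K`: a functor from the poset `P`
to the category of `K`-vector spaces. -/
structure PersMod (P : Type*) [Preorder P] (K : Type*) [Field K] where
  V : P → Type*
  acg : ∀ p, AddCommGroup (V p)
  mod : ∀ p, Module K (V p)
  map : ∀ {p q : P}, p ≤ q → (V p →ₗ[K] V q)
  map_id : ∀ p : P, map (le_refl p) = LinearMap.id
  map_comp : ∀ {p q r : P} (hpq : p ≤ q) (hqr : q ≤ r),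
    map (hpq.trans hqr) = (map hqr).comp (map hpq)

attribute [instance] PersMod.acg PersMod.mod

open Classical in
/-- The interval module `F_I` of a convex set `I` in a poset `P`: it assigns `K` to
points of `I` and `0` elsewhere, with identity maps inside `I` and zero maps
otherwise. -/
noncomputable def intervalModule (K : Type*) [Field K] {P : Type*} [Preorder P]
    (I : Set P)
    (hconv : ∀ ⦃x y z : P⦄, x ∈ I → y ∈ I → x ≤ z → z ≤ y → z ∈ I) :
    PersMod P K where
  V p := ↥(if p ∈ I then (⊤ : Submodule K K) else ⊥)
  acg p := inferInstance
  mod p := inferInstance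
  map {p q} _ :=
    { toFun := fun x => ⟨if p ∈ I ∧ q ∈ I then (x : K) else 0, by
        by_cases hq : q ∈ I
        · simp [hq]
        · have : ¬ (p ∈ I ∧ q ∈ I) := fun h => hq h.2
          rw [if_neg this, if_neg hq]
          exact Submodule.zero_mem _⟩
      map_add' := by
        intro x y
        apply Subtype.ext
        by_cases h' : p ∈ I ∧ q ∈ I <;> simp [h']
      map_smul' := by
        intro c x
        apply Subtype.ext
        by_cases h' : p ∈ I ∧ q ∈ I <;> simp [h'] }
  map_id := by
    intro p
    apply LinearMap.ext
    intro x
    apply Subtype.ext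
    by_cases hp : p ∈ I
    · simp [hp]
    · have hx : (x : K) = 0 := by
        have h0 : ∀ y : K, y ∈ (if p ∈ I then (⊤ : Submodule K K) else ⊥) → y = 0 := by
          intro y hy
          rw [if_neg hp, Submodule.mem_bot] at hy
          exact hy
        exact h0 _ x.2
      show (if p ∈ I ∧ p ∈ I then (x : K) else 0) = (x : K)
      rw [if_neg (fun h => hp h.1), hx]
  map_comp := by
    intro p q r hpq hqr
    apply LinearMap.ext
    intro x
    apply Subtype.ext
    by_cases hp : p ∈ I
    · by_cases hr : r ∈ I
      · have hq : q ∈ I := hconv hp hr hpq hqr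
        simp [hp, hq, hr]
      · have : ¬ (p ∈ I ∧ r ∈ I) := fun h => hr h.2
        simp [hr, this]
    · have hx : (x : K) = 0 := by
        have h0 : ∀ y : K, y ∈ (if p ∈ I then (⊤ : Submodule K K) else ⊥) → y = 0 := by
          intro y hy
          rw [if_neg hp, Submodule.mem_bot] at hy
          exact hy
        exact h0 _ x.2
      have h1 : ¬ (p ∈ I ∧ r ∈ I) := fun h => hp h.1
      have h2 : ¬ (p ∈ I ∧ q ∈ I) := fun h => hp h.1
      simp [h1, h2, hx]

/-- Direct sum (pointwise) of two persistence modules. -/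
noncomputable def sumPers {P : Type*} [Preorder P] {K : Type*} [Field K]
    (M N : PersMod P K) : PersMod P K where
  V p := M.V p × N.V p
  acg p := inferInstance
  mod p := inferInstance
  map h := (M.map h).prodMap (N.map h)
  map_id := by
    intro p
    refine LinearMap.ext fun x => ?_
    show ((M.map (le_refl p)).prodMap (N.map (le_refl p))) x = x
    rw [M.map_id, N.map_id]
    rfl
  map_comp := by
    intro p q r hpq hqr
    refine LinearMap.ext fun x => ?_
    show ((M.map (hpq.trans hqr)).prodMap (N.map (hpq.trans hqr))) x
        = ((M.map hqr).prodMap (N.map hqr)) (((M.map hpq).prodMap (N.map hpq)) x)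
    rw [M.map_comp hpq hqr, N.map_comp hpq hqr]
    rfl

/-- An isomorphism of persistence modules: a pointwise linear equivalence commuting
with the structure maps. -/
structure PersModIso {P : Type*} [Preorder P] {K : Type*} [Field K]
    (M N : PersMod P K) where
  e : ∀ p : P, M.V p ≃ₗ[K] N.V p
  comm : ∀ {p q : P} (h : p ≤ q) (x : M.V p), e q (M.map h x) = N.map h (e p x)

/-- A `δ`-interleaving between two `ℝ`-indexed persistence modules: morphisms
`F : M → N[δ]` and `G : N → M[δ]` whose composites are the `2δ`-shift morphisms. -/
structure Interleaving {K : Type*} [Field K] (M N : PersMod ℝ K)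
    (δ : ℝ) (hδ : 0 ≤ δ) where
  F : ∀ x : ℝ, M.V x →ₗ[K] N.V (x + δ)
  G : ∀ x : ℝ, N.V x →ₗ[K] M.V (x + δ)
  natF : ∀ (x y : ℝ) (h : x ≤ y) (v : M.V x),
    F y (M.map h v) = N.map (by linarith : x + δ ≤ y + δ) (F x v)
  natG : ∀ (x y : ℝ) (h : x ≤ y) (v : N.V x),
    G y (N.map h v) = M.map (by linarith : x + δ ≤ y + δ) (G x v)
  GF : ∀ (x : ℝ) (v : M.V x),
    G (x + δ) (F x v) = M.map (by linarith : x ≤ x + δ + δ) v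
  FG : ∀ (x : ℝ) (v : N.V x),
    F (x + δ) (G x v) = N.map (by linarith : x ≤ x + δ + δ) v

/-- If two intervals `I, J ⊆ ℝ` are `δ`-interleaved as interval modules and `I` is
not `2δ`-trivial, then `J` is nonempty; moreover for each `x ∈ I` with `x + 2δ ∈ I`
we have `x + δ ∈ J`. -/
theorem interleaved_not_trivial {K : Type*} [Field K] (I J : Set ℝ)
    (hI : ∀ ⦃x y z : ℝ⦄, x ∈ I → y ∈ I → x ≤ z → z ≤ y → z ∈ I)
    (hJ : ∀ ⦃x y z : ℝ⦄, x ∈ J → y ∈ J → x ≤ z → z ≤ y → z ∈ J)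
    (δ : ℝ) (hδ : 0 ≤ δ)
    (hil : Nonempty (Interleaving (intervalModule K I hI) (intervalModule K J hJ) δ hδ))
    (hnontriv : ∃ x, x ∈ I ∧ x + 2 * δ ∈ I) :
    J.Nonempty ∧ ∀ x ∈ I, x + 2 * δ ∈ I → x + δ ∈ J := by
  obtain ⟨il⟩ := hil
  have key : ∀ x ∈ I, x + 2 * δ ∈ I → x + δ ∈ J := by
    intro x hx hx2
    by_contra hxJ
    have hx2' : x + δ + δ ∈ I := by
      have h : x + δ + δ = x + 2 * δ := by ring
      rwa [h]
    set v : (intervalModule K I hI).V x := ⟨1, by simp [intervalModule, hx]⟩ with hv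
    have hF : il.F x v = 0 := by
      apply Subtype.ext
      have h2 := (il.F x v).2
      simp only [intervalModule, hxJ, if_false] at h2 ⊢
      rw [Submodule.mem_bot] at h2
      exact h2
    have hGF := il.GF x v
    rw [hF, map_zero] at hGF
    have hval := congrArg Subtype.val hGF
    simp [intervalModule, hx, hx2', hv] at hval
    change (0 : K) = 1 at hval
    exact zero_ne_one hval
  obtain ⟨x, hx, hx2⟩ := hnontriv
  exact ⟨⟨x + δ, key x hx hx2⟩, key⟩
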